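/- arXiv:2005.09798 — 2 statements merged into one kernel-verified Lean document; each statement's English description precedes it below -/
import Mathlib

section
/- If a nontrivial finite group G admits a DRR, then G admits a DRR that is weakly connected and prime with respect to cartesian product. Similarly, if a nontrivial finite group G admits a GRR, then G admits a GRR that is connected and prime with respect to cartesian product. -/
/-! Common definitions: Cayley digraphs, digraph automorphism groups,
DRRs/GRRs, detecting groups, the regular representation, the group `W(G,N)`,
wreath and cartesian products of digraphs, and the wreath product of groups. -/

universe u

/-- The adjacency relation of the Cayley digraph `Cay(G,S)`:
there is a directed edge from `g₁` to `g₂` iff `g₂ = s * g₁` for some `s ∈ S`. -/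
def cayAdj {G : Type*} [Group G] (S : Set G) : G → G → Prop :=
  fun g₁ g₂ => ∃ s ∈ S, g₂ = s * g₁

/-- The automorphism group of a digraph (given by its adjacency relation),
as a subgroup of the symmetric group on the vertices. -/
def digraphAut {V : Type*} (Adj : V → V → Prop) : Subgroup (Equiv.Perm V) where
  carrier := {σ | ∀ x y, Adj (σ x) (σ y) ↔ Adj x y}
  one_mem' := fun _ _ => Iff.rfl
  mul_mem' := by
    intro σ τ hσ hτ x y
    simp only [Equiv.Perm.mul_apply]
    exact (hσ _ _).trans (hτ _ _)
  inv_mem' := by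
    intro σ hσ x y
    have h := (hσ (σ⁻¹ x) (σ⁻¹ y)).symm
    simpa using h

/-- A digraph is a DRR (digraphical regular representation) of the group `G` if its
automorphism group is isomorphic to `G` and acts regularly on the vertex set. -/
def IsDRR (G : Type*) [Group G] {V : Type*} (Adj : V → V → Prop) : Prop :=
  Nonempty (digraphAut Adj ≃* G) ∧
    ∀ v w : V, ∃! σ : digraphAut Adj, (σ : Equiv.Perm V) v = w

/-- A GRR (graphical regular representation) of `G` is a DRR that is a graph. -/
def IsGRR (G : Type*) [Group G] {V : Type*} (Adj : V → V → Prop) : Prop :=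
  Symmetric Adj ∧ IsDRR G Adj

/-- `Aut(G,S)` is trivial: the only group automorphism `φ` of `G` with `φ(S) = S`
is the identity. -/
def AutGSTrivial {G : Type*} [Group G] (S : Set G) : Prop :=
  ∀ φ : MulAut G, ⇑φ '' S = S → φ = 1

/-- `G` is DRR-detecting: for every `S ⊆ G`, if `Aut(G,S) = 1` then
`Cay(G,S)` is a DRR of `G`. -/
def DRRDetecting (G : Type*) [Group G] : Prop :=
  ∀ S : Set G, AutGSTrivial S → IsDRR G (cayAdj S)

/-- `G` is GRR-detecting: for every inverse-closed `S ⊆ G`, if `Aut(G,S) = 1` then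
`Cay(G,S)` is a GRR of `G`. -/
def GRRDetecting (G : Type*) [Group G] : Prop :=
  ∀ S : Set G, (∀ s ∈ S, s⁻¹ ∈ S) → AutGSTrivial S → IsGRR G (cayAdj S)

/-- `G` admits a DRR (equivalently, some Cayley digraph of `G` is a DRR). -/
def HasDRR (G : Type*) [Group G] : Prop :=
  ∃ S : Set G, IsDRR G (cayAdj S)

/-- `G` admits a GRR (equivalently, some Cayley graph of `G` is a GRR). -/
def HasGRR (G : Type*) [Group G] : Prop :=
  ∃ S : Set G, (∀ s ∈ S, s⁻¹ ∈ S) ∧ IsGRR G (cayAdj S)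

/-- The right regular representation `Ĝ = {x ↦ x·g : g ∈ G}` of `G`,
as a subgroup of the symmetric group on `G`. -/
def regularRep (G : Type*) [Group G] : Subgroup (Equiv.Perm G) where
  carrier := {σ | ∃ g : G, ∀ x, σ x = x * g}
  one_mem' := ⟨1, fun x => (mul_one x).symm⟩
  mul_mem' := by
    rintro σ τ ⟨g, hg⟩ ⟨h, hh⟩
    exact ⟨h * g, fun x => by
      simp only [Equiv.Perm.mul_apply, hg, hh, mul_assoc]⟩
  inv_mem' := by
    rintro σ ⟨g, hg⟩
    refine ⟨g⁻¹, fun x => ?_⟩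
    have h1 : σ (x * g⁻¹) = x := by rw [hg]; group
    calc σ⁻¹ x = σ⁻¹ (σ (x * g⁻¹)) := by rw [h1]
      _ = x * g⁻¹ := by simp

/-- The set `W(G,N)` of all permutations `φ_{c,f} : x ↦ x·c·f(x̄)` of `G`,
where `c ∈ G` and `f : G/N → N`. -/
def Wset (G : Type*) [Group G] (N : Subgroup G) [N.Normal] : Set (Equiv.Perm G) :=
  {σ | ∃ (c : G) (f : G ⧸ N → G), (∀ q, f q ∈ N) ∧
      ∀ x : G, σ x = x * c * f (QuotientGroup.mk x)}

/-- The wreath product `X ≀ Y` of two digraphs. -/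
def wreathAdj {X Y : Type*} (A : X → X → Prop) (B : Y → Y → Prop) :
    X × Y → X × Y → Prop :=
  fun p q => A p.1 q.1 ∨ (p.1 = q.1 ∧ B p.2 q.2)

/-- The cartesian product `X □ Y` of two digraphs. -/
def cartAdj {X Y : Type*} (A : X → X → Prop) (B : Y → Y → Prop) :
    X × Y → X × Y → Prop :=
  fun p q => (p.1 = q.1 ∧ B p.2 q.2) ∨ (p.2 = q.2 ∧ A p.1 q.1)

/-- A digraph is prime with respect to the cartesian product if it has more than one
vertex and is not isomorphic to a cartesian product of two digraphs,
each with more than one vertex. -/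
def IsPrimeDigraph {V : Type u} (Adj : V → V → Prop) : Prop :=
  (∃ x y : V, x ≠ y) ∧
    ¬ ∃ (X Y : Type u) (A : X → X → Prop) (B : Y → Y → Prop) (e : V ≃ X × Y),
        (∃ x₁ x₂ : X, x₁ ≠ x₂) ∧ (∃ y₁ y₂ : Y, y₁ ≠ y₂) ∧
          ∀ v w : V, Adj v w ↔ cartAdj A B (e v) (e w)

/-- A digraph is weakly connected if any two vertices are joined by a path in the
underlying undirected graph. -/
def WeaklyConnected {V : Type*} (Adj : V → V → Prop) : Prop :=
  ∀ x y : V, Relation.ReflTransGen (fun a b => Adj a b ∨ Adj b a) x y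

/-- Translation of coordinates: the automorphism `v ↦ (x ↦ v (x * q))`
of the group `Q → N`. -/
def transAut {Q N : Type*} [Group Q] [Group N] (q : Q) : (Q → N) ≃* (Q → N) where
  toFun v := fun x => v (x * q)
  invFun v := fun x => v (x * q⁻¹)
  left_inv v := funext fun x => by simp [mul_assoc]
  right_inv v := funext fun x => by simp [mul_assoc]
  map_mul' v w := rfl

/-- The action of `Q` on `Q → N` by translating coordinates, as a homomorphism
`Q →* MulAut (Q → N)`. -/
def transHom (Q N : Type*) [Group Q] [Group N] : Q →* MulAut (Q → N) where
  toFun := transAut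
  map_one' := by
    ext v x
    simp [transAut]
  map_mul' q₁ q₂ := by
    ext v x
    simp [transAut, mul_assoc, MulAut.mul_apply]

/-- The wreath product `Q ≀ N` of two groups: the semidirect product
`N^Q ⋊ Q`, with `Q` acting on `N^Q` by translating the coordinates. -/
abbrev WreathProd (Q N : Type*) [Group Q] [Group N] :=
  SemidirectProduct (Q → N) Q (transHom Q N)


/-!
Write `Γ*` for the reverse complement of `Γ` (`u → v` iff `u ≠ v` and `v ↛ u`). The Cayley
digraph `Cay(G,S)* = Cay(G,S*)`, `S* = {g ≠ 1 | g⁻¹ ∉ S}`, has the same automorphism group as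
`Cay(G,S)`, so it is again a DRR (a GRR if `S` is inverse-closed); moreover `Γ** = Γ` for
loopless `Γ`, and `Γ*` is weakly connected whenever `Γ` is not. It therefore suffices to show,
for a finite loopless DRR `Γ`:

* `Γ` and `Γ*` are not both cartesian products. As `Aut Γ` is transitive, all out-degrees agree,
  so if one vertex of `X □ Y` had out-degree `(|X| - 1) + (|Y| - 1)`, both factors would be
  complete; but the rook's graph `K_a □ K_b` has a nontrivial automorphism fixing a vertex.
  Hence for `Γ ≅ X □ Y` and `Γ* ≅ U □ W` of factor sizes `a, b, c, d` we get
  `deg⁻_Γ(v) ≤ a + b - 3` and `deg⁺_{Γ*}(v) ≤ c + d - 3`, whereas these two degrees add up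
  to `n - 1` with `ab = cd = n`. Since `2(a + b) ≤ ab + 4` for `a, b ≥ 2`, this is impossible.
* If `Γ ≅ X □ Y` is weakly connected, so is `Γ*`: when a factor has at least three vertices,
  the vertices differing in both coordinates already connect `Γ*`, and otherwise `Γ` would be
  `K₂ □ K₂`.
-/

section Digraph

variable {V : Type*} {Adj : V → V → Prop}

theorem mem_digraphAut {σ : Equiv.Perm V} :
    σ ∈ digraphAut Adj ↔ ∀ x y, Adj (σ x) (σ y) ↔ Adj x y :=
  Iff.rfl

theorem digraphAut_flip : digraphAut (flip Adj) = digraphAut Adj := by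
  ext σ
  exact ⟨fun h x y => h y x, fun h x y => h y x⟩

/-- The reverse complement `Γ*`; for a graph it is the complement. -/
def revCompl (Adj : V → V → Prop) : V → V → Prop :=
  fun u v => u ≠ v ∧ ¬ Adj v u

theorem revCompl_irrefl : ∀ v, ¬ revCompl Adj v v :=
  fun _ h => h.1 rfl

theorem revCompl_revCompl (hl : ∀ v, ¬ Adj v v) : revCompl (revCompl Adj) = Adj := by
  funext u v
  refine propext ⟨fun h => ?_, fun h => ⟨fun huv => hl v (huv ▸ h), fun h' => h'.2 h⟩⟩
  by_contra hAdj
  exact h.2 ⟨Ne.symm h.1, hAdj⟩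

theorem digraphAut_revCompl (hloop : ∀ u v, Adj u u ↔ Adj v v) :
    digraphAut (revCompl Adj) = digraphAut Adj := by
  ext σ
  simp only [mem_digraphAut, revCompl, σ.injective.ne_iff]
  refine ⟨fun h x y => ?_, fun h x y => by rw [h y x]⟩
  obtain rfl | hxy := eq_or_ne x y
  · exact hloop _ _
  · exact not_iff_not.1 (by simpa [hxy.symm] using h y x)

theorem weaklyConnected_iff_preconnected :
    WeaklyConnected Adj ↔ (SimpleGraph.fromRel Adj).Preconnected := by
  simp only [WeaklyConnected, SimpleGraph.Preconnected, SimpleGraph.reachable_iff_reflTransGen]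
  refine forall₂_congr fun x y =>
    ⟨fun h => Relation.reflTransGen_closed (fun a b hab => ?_) x y h,
      fun h => Relation.ReflTransGen.mono (fun a b hab => (SimpleGraph.fromRel_adj ..).1 hab |>.2)
        x y h⟩
  obtain rfl | hne := eq_or_ne a b
  · exact .refl
  · exact .single ((SimpleGraph.fromRel_adj ..).2 ⟨hne, hab⟩)

theorem weaklyConnected_revCompl_of_not (h : ¬ WeaklyConnected Adj) :
    WeaklyConnected (revCompl Adj) := by
  rw [weaklyConnected_iff_preconnected] at h ⊢
  refine ((SimpleGraph.fromRel Adj).connected_or_preconnected_compl.resolve_left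
    fun hc => h hc.preconnected).mono fun u v huv => ?_
  rw [SimpleGraph.compl_adj, SimpleGraph.fromRel_adj] at huv
  exact (SimpleGraph.fromRel_adj ..).2
    ⟨huv.1, .inl ⟨huv.1, fun h' => huv.2 ⟨huv.1, .inr h'⟩⟩⟩

/-- In-degrees are taken as `outDegree (flip Adj)`. -/
noncomputable def outDegree (Adj : V → V → Prop) (v : V) : ℕ :=
  {w | Adj v w}.ncard

theorem outDegree_apply_of_mem_digraphAut {σ : Equiv.Perm V} (hσ : σ ∈ digraphAut Adj)
    (v : V) : outDegree Adj (σ v) = outDegree Adj v := by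
  have : {w | Adj (σ v) w} = σ '' {w | Adj v w} := by
    ext w
    rw [Equiv.image_eq_preimage_symm]
    simp [← hσ v (σ.symm w)]
  rw [outDegree, this, Set.ncard_image_of_injective _ σ.injective, outDegree]

theorem setOf_adj_subset_compl (hl : ∀ v, ¬ Adj v v) (v : V) : {w | Adj v w} ⊆ {v}ᶜ :=
  fun _ hw h => hl v (h ▸ hw)

theorem outDegree_le [Finite V] (hl : ∀ v, ¬ Adj v v) (v : V) :
    outDegree Adj v ≤ Nat.card V - 1 := by
  rw [← Set.ncard_singleton v, ← Set.ncard_compl]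
  exact Set.ncard_le_ncard (setOf_adj_subset_compl hl v)

theorem adj_iff_ne_of_outDegree_eq [Finite V] (hl : ∀ v, ¬ Adj v v) {v : V}
    (h : outDegree Adj v = Nat.card V - 1) (w : V) : Adj v w ↔ v ≠ w := by
  have hfull : {w | Adj v w} = {v}ᶜ :=
    Set.eq_of_subset_of_ncard_le (setOf_adj_subset_compl hl v)
      (by rw [Set.ncard_compl, Set.ncard_singleton, ← h, outDegree])
  simpa [eq_comm] using Set.ext_iff.1 hfull w

theorem outDegree_revCompl_add_outDegree_flip [Finite V] (hl : ∀ v, ¬ Adj v v) (v : V) :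
    outDegree (revCompl Adj) v + outDegree (flip Adj) v + 1 = Nat.card V := by
  have hsplit : {w | revCompl Adj v w} ∪ {w | flip Adj v w} = {v}ᶜ := by
    ext w
    simp only [revCompl, flip, Set.mem_union, Set.mem_ofPred_eq, Set.mem_compl_iff,
      Set.mem_singleton_iff]
    by_cases h : Adj w v
    · exact iff_of_true (.inr h) fun hw => hl v (hw ▸ h)
    · simp [h, eq_comm]
  have hdisj : Disjoint {w | revCompl Adj v w} {w | flip Adj v w} :=
    Set.disjoint_left.2 fun _ h h' => h.2 h'
  rw [outDegree, outDegree, ← Set.ncard_union_eq hdisj, hsplit, Set.ncard_compl,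
    Set.ncard_singleton]
  have : 0 < Nat.card V := Nat.card_pos_iff.2 ⟨⟨v⟩, inferInstance⟩
  omega

end Digraph

section Regular

variable {V : Type*} {Adj Adj' : V → V → Prop}

/-- The second conjunct of `IsDRR`. -/
def AutIsRegular (Adj : V → V → Prop) : Prop :=
  ∀ v w : V, ∃! σ : digraphAut Adj, (σ : Equiv.Perm V) v = w

theorem autIsRegular_congr (h : digraphAut Adj = digraphAut Adj') :
    AutIsRegular Adj ↔ AutIsRegular Adj' := by
  unfold AutIsRegular
  rw [h]

theorem isDRR_congr {G : Type*} [Group G] (h : digraphAut Adj = digraphAut Adj') :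
    IsDRR G Adj ↔ IsDRR G Adj' := by
  unfold IsDRR
  rw [h]

namespace AutIsRegular

theorem eq_one_of_apply_eq (hreg : AutIsRegular Adj) {σ : Equiv.Perm V}
    (hσ : σ ∈ digraphAut Adj) {v : V} (hv : σ v = v) : σ = 1 :=
  congrArg Subtype.val ((hreg v v).unique (y₁ := ⟨σ, hσ⟩) (y₂ := 1) hv rfl)

theorem outDegree_eq (hreg : AutIsRegular Adj) (v w : V) :
    outDegree Adj v = outDegree Adj w := by
  obtain ⟨σ, hσ, -⟩ := hreg w v
  rw [← hσ, outDegree_apply_of_mem_digraphAut σ.2]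

theorem flip (hreg : AutIsRegular Adj) : AutIsRegular (flip Adj) :=
  (autIsRegular_congr digraphAut_flip).2 hreg

theorem revCompl (hreg : AutIsRegular Adj) (hl : ∀ v, ¬ Adj v v) :
    AutIsRegular (revCompl Adj) :=
  (autIsRegular_congr (digraphAut_revCompl fun u v => iff_of_false (hl u) (hl v))).2 hreg

end AutIsRegular

end Regular

section Cayley

variable {G : Type*} [Group G] {S : Set G}

def revComplSet (S : Set G) : Set G :=
  {g | g ≠ 1 ∧ g⁻¹ ∉ S}

theorem cayAdj_iff {u v : G} : cayAdj S u v ↔ v * u⁻¹ ∈ S :=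
  ⟨fun ⟨s, hs, h⟩ => by simpa [h] using hs, fun h => ⟨v * u⁻¹, h, by group⟩⟩

theorem cayAdj_revComplSet (S : Set G) : cayAdj (revComplSet S) = revCompl (cayAdj S) := by
  funext u v
  simp [cayAdj_iff, revComplSet, revCompl, mul_inv_eq_one, eq_comm]

theorem isDRR_cayAdj_revComplSet (h : IsDRR G (cayAdj S)) :
    IsDRR G (cayAdj (revComplSet S)) := by
  rwa [cayAdj_revComplSet,
    isDRR_congr (digraphAut_revCompl fun u v => by simp [cayAdj_iff])]

theorem inv_mem_revComplSet (h : ∀ s ∈ S, s⁻¹ ∈ S) :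
    ∀ s ∈ revComplSet S, s⁻¹ ∈ revComplSet S :=
  fun s ⟨hs1, hs⟩ => ⟨inv_ne_one.2 hs1, fun hs' => hs (by simpa using h _ hs')⟩

theorem symmetric_cayAdj (h : ∀ s ∈ S, s⁻¹ ∈ S) : ∀ u v, cayAdj S u v → cayAdj S v u :=
  fun u v huv => by simpa [cayAdj_iff] using h _ (cayAdj_iff.1 huv)

end Cayley

section Product

variable {X Y : Type*}

theorem exists_ne_and_ne_of_two_lt_card [Finite X] (h : 2 < Nat.card X) (a b : X) :
    ∃ c, c ≠ a ∧ c ≠ b :=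
  Cardinal.exists_ne_ne_of_three_le (by rw [← Nat.cast_card]; exact_mod_cast h) a b

theorem outDegree_cartAdj [Finite X] [Finite Y] {A : X → X → Prop} {B : Y → Y → Prop}
    (hB : ∀ y, ¬ B y y) (p : X × Y) :
    outDegree (cartAdj A B) p = outDegree A p.1 + outDegree B p.2 := by
  have hsplit : {q | cartAdj A B p q} =
      (fun x => (x, p.2)) '' {x | A p.1 x} ∪ (fun y => (p.1, y)) '' {y | B p.2 y} := by
    ext ⟨x, y⟩
    simp only [cartAdj, Set.mem_ofPred_eq, Set.mem_union, Set.mem_image, Prod.mk.injEq]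
    constructor
    · rintro (⟨rfl, h⟩ | ⟨rfl, h⟩)
      exacts [.inr ⟨y, h, rfl, rfl⟩, .inl ⟨x, h, rfl, rfl⟩]
    · rintro (⟨x, h, rfl, rfl⟩ | ⟨y, h, rfl, rfl⟩)
      exacts [.inr ⟨rfl, h⟩, .inl ⟨rfl, h⟩]
  have hdisj : Disjoint ((fun x => (x, p.2)) '' {x | A p.1 x})
      ((fun y => (p.1, y)) '' {y | B p.2 y}) := by
    rw [Set.disjoint_left]
    rintro _ ⟨x, hx, rfl⟩ ⟨y, hy, h⟩
    simp only [Prod.mk.injEq] at h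
    exact hB _ (h.2 ▸ hy)
  rw [outDegree, hsplit, Set.ncard_union_eq hdisj,
    Set.ncard_image_of_injective _ fun _ _ h => (Prod.mk.inj h).1,
    Set.ncard_image_of_injective _ fun _ _ h => (Prod.mk.inj h).2, outDegree, outDegree]

theorem cartAdj_ne_ne_iff {p q : X × Y} :
    cartAdj (· ≠ ·) (· ≠ ·) p q ↔ p ≠ q ∧ (p.1 = q.1 ∨ p.2 = q.2) := by
  obtain ⟨x, y⟩ := p
  obtain ⟨x', y'⟩ := q
  simp only [cartAdj, ne_eq, Prod.mk.injEq]
  tauto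

theorem exists_mem_digraphAut_cartAdj_ne_ne [Finite X] [Finite Y] [Nontrivial X]
    [Nontrivial Y] :
    ∃ π ∈ digraphAut (cartAdj (fun x x' : X => x ≠ x') (fun y y' : Y => y ≠ y')),
      π ≠ 1 ∧ ∃ p, π p = p := by
  classical
  have mem_of_forall : ∀ π : Equiv.Perm (X × Y),
      (∀ p q, (π p).1 = (π q).1 ∨ (π p).2 = (π q).2 ↔ p.1 = q.1 ∨ p.2 = q.2) →
      π ∈ digraphAut (cartAdj (fun x x' : X => x ≠ x') (fun y y' : Y => y ≠ y')) :=
    fun π hπ p q => by rw [cartAdj_ne_ne_iff, cartAdj_ne_ne_iff, π.injective.ne_iff, hπ]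
  obtain ⟨x, x', hx⟩ := exists_pair_ne X
  obtain ⟨y, y', hy⟩ := exists_pair_ne Y
  by_cases hY : 2 < Nat.card Y
  · obtain ⟨y'', hy''⟩ := exists_ne_and_ne_of_two_lt_card hY y y'
    refine ⟨(Equiv.refl X).prodCongr (Equiv.swap y y'), mem_of_forall _ fun p q => ?_,
      fun h => hy.symm ?_, (x, y''), by simp [Equiv.swap_apply_of_ne_of_ne hy''.1 hy''.2]⟩
    · simp
    · simpa using congrArg Prod.snd (Equiv.ext_iff.1 h (x, y))
  by_cases hX : 2 < Nat.card X
  · obtain ⟨x'', hx''⟩ := exists_ne_and_ne_of_two_lt_card hX x x'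
    refine ⟨(Equiv.swap x x').prodCongr (Equiv.refl Y), mem_of_forall _ fun p q => ?_,
      fun h => hx.symm ?_, (x'', y), by simp [Equiv.swap_apply_of_ne_of_ne hx''.1 hx''.2]⟩
    · simp
    · simpa using congrArg Prod.fst (Equiv.ext_iff.1 h (x, y))
  -- in `K₂ □ K₂` no transposition fixes a point: exchange the coordinates via `φ : X ≃ Y`
  obtain ⟨φ⟩ : Nonempty (X ≃ Y) := Finite.card_eq.1 (by
    have := Finite.one_lt_card (α := X); have := Finite.one_lt_card (α := Y); omega)
  refine ⟨(Equiv.prodComm X Y).trans (φ.symm.prodCongr φ), mem_of_forall _ fun p q => ?_,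
    fun h => hx ?_, (x, φ x), by simp⟩
  · simp [or_comm]
  · simpa using congrArg Prod.fst (Equiv.ext_iff.1 h (x', φ x))

theorem reflTransGen_fst_ne_and_snd_ne [Finite X] [Nontrivial X] [Nontrivial Y]
    (hX : 2 < Nat.card X) (p q : X × Y) :
    Relation.ReflTransGen (fun p q : X × Y => p.1 ≠ q.1 ∧ p.2 ≠ q.2) p q := by
  have of_snd_eq : ∀ {p q : X × Y}, p.2 = q.2 →
      Relation.ReflTransGen (fun p q : X × Y => p.1 ≠ q.1 ∧ p.2 ≠ q.2) p q := by
    intro p q h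
    obtain ⟨x, hx, hx'⟩ := exists_ne_and_ne_of_two_lt_card hX p.1 q.1
    obtain ⟨y, hy⟩ := exists_ne p.2
    exact .head (b := (x, y)) ⟨hx.symm, hy.symm⟩ (.single ⟨hx', h ▸ hy⟩)
  by_cases h2 : p.2 = q.2
  · exact of_snd_eq h2
  by_cases h1 : p.1 = q.1
  · obtain ⟨x, hx⟩ := exists_ne p.1
    exact .head (b := (x, q.2)) ⟨hx.symm, h2⟩ (of_snd_eq rfl)
  · exact .single ⟨h1, h2⟩

end Product

structure CartDecomp {V : Type u} (Adj : V → V → Prop) where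
  X : Type u
  Y : Type u
  A : X → X → Prop
  B : Y → Y → Prop
  e : V ≃ X × Y
  nontrivial_X : Nontrivial X
  nontrivial_Y : Nontrivial Y
  adj_iff : ∀ v w, Adj v w ↔ cartAdj A B (e v) (e w)

attribute [instance] CartDecomp.nontrivial_X CartDecomp.nontrivial_Y

theorem isPrimeDigraph_iff {V : Type u} {Adj : V → V → Prop} :
    IsPrimeDigraph Adj ↔ (∃ x y : V, x ≠ y) ∧ IsEmpty (CartDecomp Adj) :=
  and_congr_right' ⟨
    fun h => ⟨fun D => h ⟨D.X, D.Y, D.A, D.B, D.e, D.nontrivial_X.1, D.nontrivial_Y.1, D.adj_iff⟩⟩,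
    fun ⟨h⟩ ⟨X, Y, A, B, e, hX, hY, hAdj⟩ => h ⟨X, Y, A, B, e, ⟨hX⟩, ⟨hY⟩, hAdj⟩⟩

namespace CartDecomp

variable {V : Type u} {Adj : V → V → Prop} (D : CartDecomp Adj)

def swap : CartDecomp Adj where
  X := D.Y
  Y := D.X
  A := D.B
  B := D.A
  e := D.e.trans (Equiv.prodComm _ _)
  nontrivial_X := D.nontrivial_Y
  nontrivial_Y := D.nontrivial_X
  adj_iff v w := by
    rw [D.adj_iff]
    simp only [cartAdj, Equiv.trans_apply, Equiv.prodComm_apply, Prod.fst_swap, Prod.snd_swap]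
    tauto

def reverse : CartDecomp (flip Adj) where
  X := D.X
  Y := D.Y
  A := flip D.A
  B := flip D.B
  e := D.e
  nontrivial_X := D.nontrivial_X
  nontrivial_Y := D.nontrivial_Y
  adj_iff v w := by
    simp only [flip, D.adj_iff w v, cartAdj, eq_comm]

instance finite_X [Finite V] : Finite D.X :=
  have : Finite (D.X × D.Y) := .of_equiv V D.e
  .prod_left D.Y

instance finite_Y [Finite V] : Finite D.Y :=
  have : Finite (D.X × D.Y) := .of_equiv V D.e
  .prod_right D.X

theorem card_eq : Nat.card V = Nat.card D.X * Nat.card D.Y := by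
  rw [Nat.card_congr D.e, Nat.card_prod]

theorem not_A_self (hl : ∀ v, ¬ Adj v v) (x : D.X) : ¬ D.A x x := fun hA => by
  obtain ⟨y⟩ := (inferInstance : Nonempty D.Y)
  exact hl (D.e.symm (x, y)) ((D.adj_iff _ _).2 (.inr (by simpa using hA)))

theorem not_B_self (hl : ∀ v, ¬ Adj v v) (y : D.Y) : ¬ D.B y y :=
  D.swap.not_A_self hl y

theorem outDegree_eq [Finite V] (hl : ∀ v, ¬ Adj v v) (v : V) :
    outDegree Adj v = outDegree D.A (D.e v).1 + outDegree D.B (D.e v).2 := by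
  have : {w | Adj v w} = D.e ⁻¹' {q | cartAdj D.A D.B (D.e v) q} := by
    ext w
    exact D.adj_iff v w
  rw [outDegree, this, Set.ncard_preimage_of_injective_subset_range D.e.injective (by simp),
    ← outDegree]
  exact outDegree_cartAdj (D.not_B_self hl) _

theorem eq_one_of_mem_digraphAut_cartAdj (hreg : AutIsRegular Adj) {π : Equiv.Perm (D.X × D.Y)}
    (hπ : π ∈ digraphAut (cartAdj D.A D.B)) {p : D.X × D.Y} (hp : π p = p) : π = 1 := by
  have hσ : D.e.symm.permCongr π ∈ digraphAut Adj := fun v w => by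
    simp [D.adj_iff, hπ (D.e v) (D.e w)]
  have := hreg.eq_one_of_apply_eq hσ (v := D.e.symm p) (by simp [hp])
  exact Equiv.ext fun q => by simpa using congrArg (D.e ∘ (· (D.e.symm q))) this

theorem not_autIsRegular_of_complete [Finite V] (hA : ∀ x x', D.A x x' ↔ x ≠ x')
    (hB : ∀ y y', D.B y y' ↔ y ≠ y') : ¬ AutIsRegular Adj := fun hreg => by
  obtain ⟨π, hπ, hne, p, hp⟩ := exists_mem_digraphAut_cartAdj_ne_ne (X := D.X) (Y := D.Y)
  have hAB : cartAdj D.A D.B = cartAdj (· ≠ ·) (· ≠ ·) := by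
    funext p q
    simp only [cartAdj, hA, hB]
  exact hne (D.eq_one_of_mem_digraphAut_cartAdj hreg (hAB ▸ hπ) hp)

/-- Full out-degree in both factors at one vertex would, by regularity, hold at every vertex,
making `Γ ≅ K_a □ K_b`. -/
theorem outDegree_lt [Finite V] (hl : ∀ v, ¬ Adj v v) (hreg : AutIsRegular Adj) (v : V) :
    outDegree Adj v + 2 < Nat.card D.X + Nat.card D.Y := by
  by_contra! hv
  have := Finite.one_lt_card (α := D.X)
  have := Finite.one_lt_card (α := D.Y)
  have hfull : ∀ x y,
      outDegree D.A x = Nat.card D.X - 1 ∧ outDegree D.B y = Nat.card D.Y - 1 := by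
    intro x y
    have h := D.outDegree_eq hl (D.e.symm (x, y))
    rw [hreg.outDegree_eq _ v, Equiv.apply_symm_apply] at h
    dsimp only at h
    have := outDegree_le (D.not_A_self hl) x
    have := outDegree_le (D.not_B_self hl) y
    omega
  obtain ⟨x⟩ := (inferInstance : Nonempty D.X)
  obtain ⟨y⟩ := (inferInstance : Nonempty D.Y)
  exact D.not_autIsRegular_of_complete
    (fun x' => adj_iff_ne_of_outDegree_eq (D.not_A_self hl) (hfull x' y).1)
    (fun y' => adj_iff_ne_of_outDegree_eq (D.not_B_self hl) (hfull x y').2) hreg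

theorem exists_A_of_weaklyConnected (hc : WeaklyConnected Adj) : ∃ x x', D.A x x' := by
  by_contra! hA
  have fst_eq : ∀ {a b}, Adj a b → (D.e a).1 = (D.e b).1 := fun h => by
    rcases (D.adj_iff _ _).1 h with h | h
    exacts [h.1, absurd h.2 (hA _ _)]
  have hfst : ∀ v w, Relation.ReflTransGen (fun a b => Adj a b ∨ Adj b a) v w →
      (D.e v).1 = (D.e w).1 := by
    intro v w hvw
    induction hvw with
    | refl => rfl
    | tail _ hab ih => exact ih.trans (hab.elim fst_eq fun h => (fst_eq h).symm)
  obtain ⟨x, x', hx⟩ := exists_pair_ne D.X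
  obtain ⟨y⟩ := (inferInstance : Nonempty D.Y)
  exact hx (by simpa using hfst _ _ (hc (D.e.symm (x, y)) (D.e.symm (x', y))))

theorem revCompl_of_fst_ne_of_snd_ne {p q : D.X × D.Y} (h₁ : p.1 ≠ q.1) (h₂ : p.2 ≠ q.2) :
    revCompl Adj (D.e.symm p) (D.e.symm q) := by
  refine ⟨fun h => h₁ (by simpa using congrArg (fun v => (D.e v).1) h), fun h => ?_⟩
  rw [D.adj_iff, Equiv.apply_symm_apply, Equiv.apply_symm_apply] at h
  rcases h with h | h
  exacts [h₁ h.1.symm, h₂ h.1.symm]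

theorem weaklyConnected_revCompl_of_two_lt_card [Finite V] (h : 2 < Nat.card D.X) :
    WeaklyConnected (revCompl Adj) := fun v w => by
  have := Relation.ReflTransGen.lift (p := fun a b => revCompl Adj a b ∨ revCompl Adj b a)
    D.e.symm (fun p q hpq => .inl (D.revCompl_of_fst_ne_of_snd_ne hpq.1 hpq.2)) _ _
    (reflTransGen_fst_ne_and_snd_ne h (D.e v) (D.e w))
  simpa [Function.onFun] using this

theorem weaklyConnected_revCompl (D : CartDecomp Adj) [Finite V] (hl : ∀ v, ¬ Adj v v)
    (hreg : AutIsRegular Adj) (hc : WeaklyConnected Adj) : WeaklyConnected (revCompl Adj) := by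
  by_cases hX : 2 < Nat.card D.X
  · exact D.weaklyConnected_revCompl_of_two_lt_card hX
  by_cases hY : 2 < Nat.card D.Y
  · exact D.swap.weaklyConnected_revCompl_of_two_lt_card hY
  -- both factors have two vertices, and connectivity puts an arc into each
  obtain ⟨x, x', hA⟩ := D.exists_A_of_weaklyConnected hc
  obtain ⟨y, y', hB⟩ := D.swap.exists_A_of_weaklyConnected hc
  have hlt := D.outDegree_lt hl hreg (D.e.symm (x, y))
  rw [D.outDegree_eq hl, Equiv.apply_symm_apply] at hlt
  have hx : 0 < outDegree D.A x := (Set.ncard_pos).2 ⟨x', hA⟩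
  have hy : 0 < outDegree D.B y := (Set.ncard_pos).2 ⟨y', hB⟩
  dsimp only at hlt
  omega

theorem two_mul_card_add_card_le [Finite V] :
    2 * (Nat.card D.X + Nat.card D.Y) ≤ Nat.card V + 4 := by
  have := Finite.one_lt_card (α := D.X)
  have := Finite.one_lt_card (α := D.Y)
  rw [D.card_eq]
  nlinarith

theorem isEmpty_cartDecomp_revCompl (D : CartDecomp Adj) [Finite V] (hl : ∀ v, ¬ Adj v v)
    (hreg : AutIsRegular Adj) : IsEmpty (CartDecomp (revCompl Adj)) := by
  refine ⟨fun E => ?_⟩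
  obtain ⟨v⟩ : Nonempty V := D.e.nonempty
  have hsum := outDegree_revCompl_add_outDegree_flip hl v
  have hE := E.outDegree_lt revCompl_irrefl (hreg.revCompl hl) v
  have hD : outDegree (flip Adj) v + 2 < Nat.card D.X + Nat.card D.Y :=
    D.reverse.outDegree_lt hl hreg.flip v
  have := D.two_mul_card_add_card_le
  have := E.two_mul_card_add_card_le
  omega

end CartDecomp

theorem weaklyConnected_isPrime_or_revCompl {V : Type u} {Adj : V → V → Prop}
    [Finite V] (hreg : AutIsRegular Adj) (hl : ∀ v, ¬ Adj v v) (hV : ∃ x y : V, x ≠ y) :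
    (WeaklyConnected Adj ∧ IsPrimeDigraph Adj) ∨
      (WeaklyConnected (revCompl Adj) ∧ IsPrimeDigraph (revCompl Adj)) := by
  simp only [isPrimeDigraph_iff, hV, true_and, ← not_nonempty_iff]
  by_cases hc : WeaklyConnected Adj
  · by_cases hD : Nonempty (CartDecomp Adj)
    · obtain ⟨D⟩ := hD
      exact .inr ⟨D.weaklyConnected_revCompl hl hreg hc,
        not_nonempty_iff.2 (D.isEmpty_cartDecomp_revCompl hl hreg)⟩
    · exact .inl ⟨hc, hD⟩
  · refine .inr ⟨weaklyConnected_revCompl_of_not hc, fun ⟨E⟩ => hc ?_⟩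
    simpa [revCompl_revCompl hl] using E.weaklyConnected_revCompl revCompl_irrefl
      (hreg.revCompl hl) (weaklyConnected_revCompl_of_not hc)

theorem exists_cayAdj_weaklyConnected_isPrime {G : Type*} [Group G] [Finite G] [Nontrivial G]
    {S : Set G} (h : IsDRR G (cayAdj S)) :
    ∃ T, (T = revComplSet S ∨ T = revComplSet (revComplSet S)) ∧
      IsDRR G (cayAdj T) ∧ WeaklyConnected (cayAdj T) ∧ IsPrimeDigraph (cayAdj T) := by
  have h₁ := isDRR_cayAdj_revComplSet h
  have hl : ∀ v, ¬ cayAdj (revComplSet S) v v := by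
    rw [cayAdj_revComplSet]
    exact revCompl_irrefl
  rcases weaklyConnected_isPrime_or_revCompl h₁.2 hl (exists_pair_ne G) with hT | hT
  · exact ⟨_, .inl rfl, h₁, hT⟩
  · rw [← cayAdj_revComplSet] at hT
    exact ⟨_, .inr rfl, isDRR_cayAdj_revComplSet h₁, hT⟩

/-- If a nontrivial finite group admits a DRR, then it admits one that
is weakly connected and prime with respect to the cartesian product; likewise for GRRs
(with "connected" in place of "weakly connected", which coincide for graphs). -/
theorem exists_prime_connected_DRR_GRR {G : Type*} [Group G] [Fintype G] [Nontrivial G] :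
    (HasDRR G →
      ∃ S : Set G, IsDRR G (cayAdj S) ∧ WeaklyConnected (cayAdj S) ∧
        IsPrimeDigraph (cayAdj S)) ∧
    (HasGRR G →
      ∃ S : Set G, (∀ s ∈ S, s⁻¹ ∈ S) ∧ IsGRR G (cayAdj S) ∧
        WeaklyConnected (cayAdj S) ∧ IsPrimeDigraph (cayAdj S)) := by
  refine ⟨fun ⟨S, hS⟩ => ?_, fun ⟨S, hinv, hS⟩ => ?_⟩
  · obtain ⟨T, -, hT⟩ := exists_cayAdj_weaklyConnected_isPrime hS
    exact ⟨T, hT⟩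
  · obtain ⟨T, hT, hDRR, hc, hp⟩ := exists_cayAdj_weaklyConnected_isPrime hS.2
    have hinvT : ∀ t ∈ T, t⁻¹ ∈ T := by
      rcases hT with rfl | rfl
      exacts [inv_mem_revComplSet hinv, inv_mem_revComplSet (inv_mem_revComplSet hinv)]
    exact ⟨T, hinvT, ⟨symmetric_cayAdj hinvT, hDRR⟩, hc, hp⟩
end

section
/- Let Q₈ = ⟨i, j, k⟩ be the quaternion group of order 8, let H be a nontrivial finite group of odd order, let S₁ ⊆ H be such that Cay(H, S₁) is a DRR of H, let G = Q₈ × H, and let S = S₁ ∪ {i} ∪ jH ⊆ G (identifying H and Q₈ with their images in G). Then Aut(G, S) = {1} and Cay(G, S) is not a DRR of G; that is, Cay(G,S) witnesses that G is not DRR-detecting. -/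
/-! Common definitions: Cayley digraphs, digraph automorphism groups,
DRRs/GRRs, detecting groups, the regular representation, the group `W(G,N)`,
wreath and cartesian products of digraphs, and the wreath product of groups. -/

universe u

/-!
Here `Q₈ = QuaternionGroup 2`, with `i = a 1` and `j = xa 0`.

Since `|H|` is odd, every automorphism of `Q₈ × H` is a product `α × β` of endomorphisms of the
factors. Preserving `S` forces `α` to fix `j` and `i`, hence `α = 1`, and `β` to preserve `S₁`,
hence `β = 1` because a DRR `Cay(H,S₁)` has `Aut(H,S₁) = 1`.

For `1 ≠ h₀ ∈ H`, multiplying the `H`-coordinate on the right by `h₀` on `j⟨i⟩ × H` and fixing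
`⟨i⟩ × H` pointwise is a digraph automorphism of `Cay(Q₈ × H, S)` fixing `1`: the `S₁`-arcs stay
in a coset of `H`, the `i`-arcs in a coset of `⟨i⟩ × H`, and the `jH`-arcs join every vertex of
`q × H` to every vertex of `jq × H`. So `Cay(Q₈ × H, S)` is not a DRR.
-/

open QuaternionGroup Function

section Coprime

variable {A B : Type*} [Group A] [Group B]

theorem MonoidHom.eq_one_of_coprime_card (h : (Nat.card A).Coprime (Nat.card B))
    (f : A →* B) : f = 1 := by
  ext a
  refine orderOf_eq_one_iff.mp (Nat.eq_one_of_dvd_coprimes h ?_ (orderOf_dvd_natCard _))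
  exact (orderOf_map_dvd f a).trans (orderOf_dvd_natCard a)

theorem MonoidHom.eq_prodMap_of_coprime_card (h : (Nat.card A).Coprime (Nat.card B))
    (φ : A × B →* A × B) :
    φ = ((fst A B).comp (φ.comp (inl A B))).prodMap ((snd A B).comp (φ.comp (inr A B))) := by
  have h₁ := MonoidHom.eq_one_of_coprime_card h ((snd A B).comp (φ.comp (inl A B)))
  have h₂ := MonoidHom.eq_one_of_coprime_card h.symm ((fst A B).comp (φ.comp (inr A B)))
  ext ⟨a, b⟩ <;> rw [show ((a, b) : A × B) = (a, 1) * (1, b) by simp, map_mul]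
  · simpa using DFunLike.congr_fun h₂ b
  · simpa using DFunLike.congr_fun h₁ a

end Coprime

section Cayley

variable {G : Type*} [Group G] {S : Set G}

theorem eq_one_of_mem_digraphAut_of_apply_eq {V : Type*} {Adj : V → V → Prop}
    (hreg : ∀ v w : V, ∃! σ : digraphAut Adj, (σ : Equiv.Perm V) v = w)
    {σ : Equiv.Perm V} (hσ : σ ∈ digraphAut Adj) {v : V} (hv : σ v = v) : σ = 1 :=
  congr_arg Subtype.val ((hreg v v).unique (y₁ := ⟨σ, hσ⟩) (y₂ := 1) hv rfl)

theorem MulEquiv.toPerm_mem_digraphAut_cayAdj {φ : MulAut G} (hφ : φ '' S = S) :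
    φ.toEquiv ∈ digraphAut (cayAdj S) := by
  intro x y
  constructor
  · rintro ⟨s, hs, hy⟩
    rw [← hφ] at hs
    obtain ⟨s, hs, rfl⟩ := hs
    exact ⟨s, hs, φ.injective (by simpa using hy)⟩
  · rintro ⟨s, hs, rfl⟩
    exact ⟨φ s, hφ ▸ Set.mem_image_of_mem φ hs, by simp⟩

theorem autGSTrivial_of_isDRR (hS : IsDRR G (cayAdj S)) : AutGSTrivial S := by
  intro φ hφ
  have h := eq_one_of_mem_digraphAut_of_apply_eq hS.2 (MulEquiv.toPerm_mem_digraphAut_cayAdj hφ)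
    (v := 1) (by simp)
  ext g
  exact congr_arg (· g) h

theorem AutGSTrivial.apply_eq_self [Finite G] (hS : AutGSTrivial S) {f : G →* G}
    (hf : Injective f) (hfS : Set.MapsTo f S S) (g : G) : f g = g := by
  let φ : MulAut G := MulEquiv.ofBijective f (Finite.injective_iff_bijective.mp hf)
  have hφ : φ '' S = S := ((S.toFinite.injOn_iff_bijOn_of_mapsTo hfS).mp hf.injOn).image_eq
  exact DFunLike.congr_fun (hS φ hφ) g

end Cayley

theorem QuaternionGroup.monoidHom_ext {n : ℕ} [NeZero n] {M : Type*} [Monoid M]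
    {f g : QuaternionGroup n →* M} (ha : f (a 1) = g (a 1)) (hxa : f (xa 0) = g (xa 0)) :
    f = g := by
  have hpow : ∀ m : ZMod (2 * n), f (a m) = g (a m) := fun m => by
    rw [← ZMod.natCast_zmod_val m, ← a_one_pow, map_pow, map_pow, ha]
  ext (m | m)
  · exact hpow m
  · rw [show xa m = xa 0 * a m by simp, map_mul, map_mul, hxa, hpow]

section Witness

variable {H : Type*} [Group H]

def q8ConnectionSet (S₁ : Set H) : Set (QuaternionGroup 2 × H) :=
  (fun h => (1, h)) '' S₁ ∪ {(a 1, 1)} ∪ {p | p.1 = xa 0}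

variable {S₁ : Set H}

theorem mem_q8ConnectionSet {p : QuaternionGroup 2 × H} :
    p ∈ q8ConnectionSet S₁ ↔ (p.1 = 1 ∧ p.2 ∈ S₁) ∨ p = (a 1, 1) ∨ p.1 = xa 0 := by
  obtain ⟨q, h⟩ := p
  simp only [q8ConnectionSet, Set.mem_union, Set.mem_image, Set.mem_singleton_iff,
    Set.mem_ofPred_eq, Prod.mk.injEq, exists_eq_right_right, eq_comm (a := (1 : QuaternionGroup 2))]
  tauto

theorem cayAdj_q8ConnectionSet_iff {x y : QuaternionGroup 2 × H} :
    cayAdj (q8ConnectionSet S₁) x y ↔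
      (y.1 = x.1 ∧ ∃ s ∈ S₁, y.2 = s * x.2) ∨ (y.1 = a 1 * x.1 ∧ y.2 = x.2) ∨
        y.1 = xa 0 * x.1 := by
  simp only [cayAdj, mem_q8ConnectionSet]
  constructor
  · rintro ⟨s, (⟨hs₁, hs₂⟩ | rfl | hs), rfl⟩
    · exact Or.inl ⟨by simp [hs₁], s.2, hs₂, rfl⟩
    · exact Or.inr (Or.inl ⟨rfl, one_mul _⟩)
    · exact Or.inr (Or.inr (by simp [hs]))
  · rintro (⟨h₁, s, hs, h₂⟩ | ⟨h₁, h₂⟩ | h)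
    · exact ⟨(1, s), Or.inl ⟨rfl, hs⟩, Prod.ext (by simp [h₁]) (by simp [h₂])⟩
    · exact ⟨(a 1, 1), Or.inr (Or.inl rfl), Prod.ext h₁ (by simp [h₂])⟩
    · exact ⟨(xa 0, y.2 * x.2⁻¹), Or.inr (Or.inr rfl), Prod.ext h (by simp)⟩

def twist (h₀ : H) : QuaternionGroup 2 → H
  | .a _ => 1
  | .xa _ => h₀

theorem twist_a_one_mul (h₀ : H) (q : QuaternionGroup 2) : twist h₀ (a 1 * q) = twist h₀ q := by
  cases q <;> rfl

def twistPerm (h₀ : H) : Equiv.Perm (QuaternionGroup 2 × H) :=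
  (Equiv.refl _).prodShear fun q => Equiv.mulRight (twist h₀ q)

theorem twistPerm_mem_digraphAut (h₀ : H) :
    twistPerm h₀ ∈ digraphAut (cayAdj (q8ConnectionSet S₁)) := by
  rintro ⟨p, g⟩ ⟨q, h⟩
  simp only [twistPerm, Equiv.prodShear_apply, Equiv.refl_apply, Equiv.coe_mulRight,
    cayAdj_q8ConnectionSet_iff]
  refine or_congr (and_congr_right fun hq => ?_) (or_congr (and_congr_right fun hq => ?_) Iff.rfl)
  · simp only [hq, ← mul_assoc, mul_left_inj]
  · rw [hq, twist_a_one_mul, mul_left_inj]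

theorem not_isDRR_q8ConnectionSet [Nontrivial H] :
    ¬ IsDRR (QuaternionGroup 2 × H) (cayAdj (q8ConnectionSet S₁)) := by
  rintro ⟨-, hreg⟩
  obtain ⟨h₀, hh₀⟩ := exists_ne (1 : H)
  have h := eq_one_of_mem_digraphAut_of_apply_eq hreg (twistPerm_mem_digraphAut h₀) (v := 1)
    (Prod.ext rfl (mul_one 1))
  exact hh₀ (by simpa [twistPerm, twist] using congr_arg (fun σ => (σ (xa 0, 1)).2) h)

theorem eq_id_and_mapsTo_of_prodMap_mapsTo [Nontrivial H]
    {α : QuaternionGroup 2 →* QuaternionGroup 2} {β : H →* H} (hα : Injective α)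
    (hβ : Injective β)
    (hS : Set.MapsTo (α.prodMap β) (q8ConnectionSet S₁) (q8ConnectionSet S₁)) :
    α = MonoidHom.id _ ∧ Set.MapsTo β S₁ S₁ := by
  have mem_image {q : QuaternionGroup 2} {h : H} (hp : (q, h) ∈ q8ConnectionSet S₁) :
      (α q = 1 ∧ β h ∈ S₁) ∨ (α q = a 1 ∧ β h = 1) ∨ α q = xa 0 := by
    simpa using mem_q8ConnectionSet.mp (hS hp)
  obtain ⟨h₀, hh₀⟩ := exists_ne (1 : H)
  have hj : α (xa 0) = xa 0 := by
    rcases mem_image (h := h₀) (mem_q8ConnectionSet.mpr (.inr (.inr rfl))) with ⟨h, -⟩ | ⟨-, h⟩ | h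
    · exact absurd (hα (h.trans α.map_one.symm)) (by decide)
    · exact absurd (hβ (h.trans β.map_one.symm)) hh₀
    · exact h
  have hi : α (a 1) = a 1 := by
    rcases mem_image (mem_q8ConnectionSet.mpr (.inr (.inl rfl))) with ⟨h, -⟩ | ⟨h, -⟩ | h
    · exact absurd (hα (h.trans α.map_one.symm)) (by decide)
    · exact h
    · exact absurd (hα (h.trans hj.symm)) (by decide)
  refine ⟨QuaternionGroup.monoidHom_ext hi hj, fun s hs => ?_⟩
  rcases mem_image (q := 1) (mem_q8ConnectionSet.mpr (.inl ⟨rfl, hs⟩)) with ⟨-, h⟩ | ⟨h, -⟩ | h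
  · exact h
  · exact absurd (α.map_one.symm.trans h) (by decide)
  · exact absurd (α.map_one.symm.trans h) (by decide)

theorem autGSTrivial_q8ConnectionSet [Finite H] [Nontrivial H] (hodd : Odd (Nat.card H))
    (hS₁ : AutGSTrivial S₁) : AutGSTrivial (q8ConnectionSet S₁) := by
  intro φ hφ
  have hcop : (Nat.card (QuaternionGroup 2)).Coprime (Nat.card H) := by
    rw [Nat.card_eq_fintype_card, QuaternionGroup.card, show 4 * 2 = 2 ^ 3 from rfl]
    exact hodd.coprime_two_left.pow_left 3
  set α := (MonoidHom.fst _ _).comp (φ.toMonoidHom.comp (MonoidHom.inl _ H))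
  set β := (MonoidHom.snd _ _).comp (φ.toMonoidHom.comp (MonoidHom.inr (QuaternionGroup 2) H))
  have hφ_eq : ⇑φ = α.prodMap β :=
    congr_arg DFunLike.coe (MonoidHom.eq_prodMap_of_coprime_card hcop φ.toMonoidHom)
  obtain ⟨hα, hβ⟩ := Prod.map_injective.mp (MonoidHom.coe_prodMap α β ▸ hφ_eq ▸ φ.injective)
  obtain ⟨hα_id, hβS⟩ := eq_id_and_mapsTo_of_prodMap_mapsTo hα hβ
    (hφ_eq ▸ hφ ▸ Set.mapsTo_image φ _)
  ext ⟨q, h⟩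
  · simp [hφ_eq, hα_id]
  · simp [hφ_eq, hS₁.apply_eq_self hβ hβS h]

end Witness

/-- Let `Q₈` be the quaternion group of order `8` (with `i = a 1` and
`j = xa 0`), let `H` be a nontrivial finite group of odd order, and let `S₁ ⊆ H` be such
that `Cay(H,S₁)` is a DRR of `H`. With `S = S₁ ∪ {i} ∪ jH ⊆ Q₈ × H`, we have
`Aut(G,S) = 1` but `Cay(Q₈ × H, S)` is not a DRR; that is, it witnesses that `Q₈ × H`
is not DRR-detecting. -/
theorem Q8_witness_not_DRRDetecting {H : Type*} [Group H] [Fintype H] [Nontrivial H]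
    (hodd : Odd (Fintype.card H))
    (S₁ : Set H) (hS₁ : IsDRR H (cayAdj S₁)) :
    AutGSTrivial
      ((fun h : H => ((1 : QuaternionGroup 2), h)) '' S₁ ∪
        {((QuaternionGroup.a 1 : QuaternionGroup 2), (1 : H))} ∪
        {p : QuaternionGroup 2 × H | p.1 = QuaternionGroup.xa 0}) ∧
    ¬ IsDRR (QuaternionGroup 2 × H)
      (cayAdj
        ((fun h : H => ((1 : QuaternionGroup 2), h)) '' S₁ ∪
          {((QuaternionGroup.a 1 : QuaternionGroup 2), (1 : H))} ∪
          {p : QuaternionGroup 2 × H | p.1 = QuaternionGroup.xa 0})) := by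
  have hodd' : Odd (Nat.card H) := Nat.card_eq_fintype_card (α := H) ▸ hodd
  exact ⟨autGSTrivial_q8ConnectionSet hodd' (autGSTrivial_of_isDRR hS₁),
    not_isDRR_q8ConnectionSet⟩
end
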